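/- For all n ≥ 1 and 0 ≤ q < 1, the continuous q-Hermite polynomial satisfies the bound max_{x ∈ S(q)} |H_n(x|q)| ≤ (1-q)^{-n/2} r_n(1|q), where S(q) = [-2/√(1-q), 2/√(1-q)] and r_n(1|q) = ∑_{i=0}^n [n choose i]_q. -/

import Mathlib

noncomputable def qint (q : ℝ) (n : ℕ) : ℝ := ∑ i ∈ Finset.range n, q ^ i

noncomputable def qfact (q : ℝ) (n : ℕ) : ℝ := ∏ i ∈ Finset.range n, qint q (i + 1)

noncomputable def qPoch (a q : ℝ) (n : ℕ) : ℝ := ∏ i ∈ Finset.range n, (1 - a * q ^ i)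

/-- Gaussian binomial coefficient as a polynomial in `q`, via the Pascal-type recurrence. -/
noncomputable def qbinom (q : ℝ) : ℕ → ℕ → ℝ
  | _, 0 => 1
  | 0, _ + 1 => 0
  | n + 1, k + 1 => qbinom q n k + q ^ (k + 1) * qbinom q n (k + 1)

/-- Rescaled continuous q-Hermite polynomials `H_n(x|q)`. -/
noncomputable def qHermite (q x : ℝ) : ℕ → ℝ
  | 0 => 1
  | 1 => x
  | n + 2 => x * qHermite q x (n + 1) - qint q (n + 1) * qHermite q x n

/-- Chebyshev polynomials of the second kind. -/
noncomputable def Ucheb (x : ℝ) : ℕ → ℝ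
  | 0 => 1
  | 1 => 2 * x
  | n + 2 => 2 * x * Ucheb x (n + 1) - Ucheb x n

/-- Probabilist's Hermite polynomials. -/
noncomputable def He (x : ℝ) : ℕ → ℝ
  | 0 => 1
  | 1 => x
  | n + 2 => x * He x (n + 1) - (n + 1 : ℝ) * He x n

/-- Big q-Hermite polynomials `H_n(x|a,q)`. -/
noncomputable def bigH (q a x : ℝ) (n : ℕ) : ℝ :=
  ∑ i ∈ Finset.range (n + 1),
    qbinom q n i * q ^ (i.choose 2) * (-a) ^ i * qHermite q x (n - i)

/-- Al-Salam--Chihara polynomials `P_n(x|y,ρ,q)`. -/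
noncomputable def ASC (q x y ρ : ℝ) : ℕ → ℝ
  | 0 => 1
  | 1 => x - ρ * y
  | n + 2 =>
      (x - ρ * y * q ^ (n + 1)) * ASC q x y ρ (n + 1)
        - qint q (n + 1) * (1 - ρ ^ 2 * q ^ n) * ASC q x y ρ n

/-- Auxiliary polynomials `B_n(x|q)`. -/
noncomputable def Bpoly (q x : ℝ) : ℕ → ℝ
  | 0 => 1
  | 1 => -x
  | n + 2 => -q ^ (n + 1) * x * Bpoly q x (n + 1) + q ^ n * qint q (n + 1) * Bpoly q x n

/-!
Put `x = 2 cos θ / √(1 - q)`, `z = e^{iθ}`, `w = e^{-iθ}`. Then `(1 - q)^{n/2} H_n(x|q)` equals the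
homogeneous Rogers–Szegő polynomial `∑ₖ [n k]_q z^(n-k) w^k`: both satisfy the same three-term
recurrence, with `z + w = 2 cos θ` and `z w = 1`, the second coefficient `1 - q^(n+1)` coming from
the absorption identity `(1 - q^(k+1)) [n+1, k+1]_q = (1 - q^(n+1)) [n, k]_q`.
As `|z| = |w| = 1` and the Gaussian binomials are nonnegative for `q ≥ 0`, the triangle
inequality gives the bound.
-/

open Finset

section QBinomial

variable (q : ℝ)

lemma qint_add (a b : ℕ) : qint q (a + b) = qint q a + q ^ a * qint q b := by
  simp only [qint, sum_range_add, mul_sum, pow_add]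

lemma one_sub_mul_qint (n : ℕ) : (1 - q) * qint q n = 1 - q ^ n :=
  mul_neg_geom_sum q n

@[simp]
lemma qfact_zero : qfact q 0 = 1 := prod_range_zero _

lemma qfact_succ (n : ℕ) : qfact q (n + 1) = qfact q n * qint q (n + 1) :=
  prod_range_succ _ n

variable {q}

lemma qint_succ_pos (hq : 0 ≤ q) (n : ℕ) : 0 < qint q (n + 1) := by
  rw [qint, sum_range_succ', pow_zero]
  have : 0 ≤ ∑ i ∈ range n, q ^ (i + 1) := sum_nonneg fun i _ => pow_nonneg hq (i + 1)
  positivity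

lemma qfact_pos (hq : 0 ≤ q) (n : ℕ) : 0 < qfact q n :=
  prod_pos fun i _ => qint_succ_pos hq i

variable (q)

@[simp]
lemma qbinom_zero_right (n : ℕ) : qbinom q n 0 = 1 := by
  cases n <;> rfl

lemma qbinom_succ_succ (n k : ℕ) :
    qbinom q (n + 1) (k + 1) = qbinom q n k + q ^ (k + 1) * qbinom q n (k + 1) :=
  rfl

lemma qbinom_eq_zero_of_lt {n k : ℕ} (h : n < k) : qbinom q n k = 0 := by
  induction n generalizing k with
  | zero => obtain ⟨k, rfl⟩ := Nat.exists_eq_succ_of_ne_zero h.ne'; rfl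
  | succ n ih =>
    obtain ⟨k, rfl⟩ := Nat.exists_eq_succ_of_ne_zero (by omega : k ≠ 0)
    rw [qbinom_succ_succ, ih (by omega), ih (by omega), mul_zero, add_zero]

variable {q}

lemma qbinom_nonneg (hq : 0 ≤ q) (n k : ℕ) : 0 ≤ qbinom q n k := by
  induction n generalizing k with
  | zero => cases k <;> simp [qbinom]
  | succ n ih =>
    cases k with
    | zero => simp
    | succ k => exact add_nonneg (ih k) (mul_nonneg (pow_nonneg hq _) (ih (k + 1)))

variable (q)

lemma qbinom_mul_qfact_mul_qfact {n k : ℕ} (hk : k ≤ n) :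
    qbinom q n k * qfact q k * qfact q (n - k) = qfact q n := by
  induction n generalizing k with
  | zero => obtain rfl := Nat.le_zero.mp hk; simp
  | succ n ih =>
    cases k with
    | zero => simp
    | succ j =>
      have hj : j ≤ n := by omega
      -- for `j = n` both sides vanish, as `qint q 0 = 0`
      have second : q ^ (j + 1) * qbinom q n (j + 1) * qfact q (j + 1) * qfact q (n - j) =
          q ^ (j + 1) * qint q (n - j) * qfact q n := by
        rcases hj.eq_or_lt with rfl | hjn
        · simp [qbinom_eq_zero_of_lt q (Nat.lt_succ_self j), qint]
        · obtain ⟨m, hm⟩ : ∃ m, n - j = m + 1 := ⟨n - (j + 1), by omega⟩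
          have hm' : n - (j + 1) = m := by omega
          rw [← ih hjn, hm, hm', qfact_succ, qfact_succ]
          ring
      have split : qint q (n + 1) = qint q (j + 1) + q ^ (j + 1) * qint q (n - j) := by
        rw [← qint_add, show j + 1 + (n - j) = n + 1 by omega]
      rw [qfact_succ q j] at second
      rw [Nat.succ_sub_succ, qbinom_succ_succ, qfact_succ, qfact_succ]
      linear_combination qint q (j + 1) * ih hj + second - qfact q n * split

variable {q}

lemma qint_mul_qbinom_succ_succ (hq : 0 ≤ q) (n k : ℕ) :
    qint q (k + 1) * qbinom q (n + 1) (k + 1) = qint q (n + 1) * qbinom q n k := by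
  rcases le_or_gt k n with hk | hk
  · have hfact : qfact q k * qfact q (n - k) ≠ 0 := (mul_pos (qfact_pos hq k) (qfact_pos hq _)).ne'
    refine mul_right_cancel₀ hfact ?_
    have big := qbinom_mul_qfact_mul_qfact q (Nat.succ_le_succ hk)
    rw [Nat.succ_sub_succ, qfact_succ, qfact_succ] at big
    linear_combination big - qint q (n + 1) * qbinom_mul_qfact_mul_qfact q hk
  · rw [qbinom_eq_zero_of_lt q hk, qbinom_eq_zero_of_lt q (Nat.succ_lt_succ hk), mul_zero, mul_zero]

lemma one_sub_pow_mul_qbinom_succ_succ (hq : 0 ≤ q) (n k : ℕ) :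
    (1 - q ^ (k + 1)) * qbinom q (n + 1) (k + 1) = (1 - q ^ (n + 1)) * qbinom q n k := by
  rw [← one_sub_mul_qint, ← one_sub_mul_qint]
  linear_combination (1 - q) * qint_mul_qbinom_succ_succ hq n k

end QBinomial

open Finset.Nat

noncomputable def rogersSzego (q : ℝ) (z w : ℂ) (n : ℕ) : ℂ :=
  ∑ p ∈ antidiagonal n, (qbinom q n p.2 : ℂ) * z ^ p.1 * w ^ p.2

section RogersSzego

variable {q : ℝ} {z w : ℂ}

lemma rogersSzego_add_two (hq : 0 ≤ q) (n : ℕ) :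
    rogersSzego q z w (n + 2) =
      (z + w) * rogersSzego q z w (n + 1) -
        (1 - (q : ℂ) ^ (n + 1)) * (z * w) * rogersSzego q z w n := by
  have pascal (k : ℕ) : (qbinom q (n + 2) (k + 1) : ℂ) =
      qbinom q (n + 1) k + (q : ℂ) ^ (k + 1) * qbinom q (n + 1) (k + 1) := by
    rw [qbinom_succ_succ]; push_cast; ring
  have absorb (k : ℕ) : (1 - (q : ℂ) ^ (k + 1)) * qbinom q (n + 1) (k + 1) =
      (1 - (q : ℂ) ^ (n + 1)) * qbinom q n k := by
    exact_mod_cast one_sub_pow_mul_qbinom_succ_succ hq n k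
  have top : rogersSzego q z w (n + 2) = z ^ (n + 2) + (w * rogersSzego q z w (n + 1) +
      ∑ p ∈ antidiagonal (n + 1),
        (q : ℂ) ^ (p.2 + 1) * qbinom q (n + 1) (p.2 + 1) * z ^ p.1 * w ^ (p.2 + 1)) := by
    rw [rogersSzego, sum_antidiagonal_succ', rogersSzego, mul_sum, ← sum_add_distrib]
    congr 1
    · simp
    · exact sum_congr rfl fun p _ => by rw [pascal]; ring
  have shifted : ∑ p ∈ antidiagonal (n + 1),
        (q : ℂ) ^ (p.2 + 1) * qbinom q (n + 1) (p.2 + 1) * z ^ p.1 * w ^ (p.2 + 1) =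
      ∑ p ∈ antidiagonal n,
        (q : ℂ) ^ (p.2 + 1) * qbinom q (n + 1) (p.2 + 1) * z ^ (p.1 + 1) * w ^ (p.2 + 1) := by
    rw [sum_antidiagonal_succ, qbinom_eq_zero_of_lt q (Nat.lt_succ_self (n + 1))]
    simp
  have left : z * rogersSzego q z w (n + 1) = z ^ (n + 2) +
      ∑ p ∈ antidiagonal n, (qbinom q (n + 1) (p.2 + 1) : ℂ) * z ^ (p.1 + 1) * w ^ (p.2 + 1) := by
    rw [rogersSzego, sum_antidiagonal_succ', mul_add, mul_sum]
    congr 1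
    · simp [pow_succ']
    · exact sum_congr rfl fun p _ => by ring
  have lower : (1 - (q : ℂ) ^ (n + 1)) * (z * w) * rogersSzego q z w n =
      ∑ p ∈ antidiagonal n, (qbinom q (n + 1) (p.2 + 1) : ℂ) * z ^ (p.1 + 1) * w ^ (p.2 + 1) -
      ∑ p ∈ antidiagonal n,
        (q : ℂ) ^ (p.2 + 1) * qbinom q (n + 1) (p.2 + 1) * z ^ (p.1 + 1) * w ^ (p.2 + 1) := by
    rw [rogersSzego, mul_sum, ← sum_sub_distrib]
    exact sum_congr rfl fun p _ => by
      linear_combination (-z ^ (p.1 + 1) * w ^ (p.2 + 1)) * absorb p.2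
  rw [lower]
  linear_combination top - left + shifted

lemma qHermite_eq_rogersSzego (hq : 0 ≤ q) {s x : ℝ} (hs : s ^ 2 = 1 - q) (hzw : z * w = 1)
    (hsum : z + w = s * x) (n : ℕ) : ((s ^ n * qHermite q x n : ℝ) : ℂ) = rogersSzego q z w n := by
  induction n using Nat.twoStepInduction with
  | zero => simp [rogersSzego, qHermite]
  | one =>
    simp [rogersSzego, qHermite, sum_antidiagonal_succ, qbinom_succ_succ, qbinom_eq_zero_of_lt,
      ← hsum, add_comm]
  | more n ih ih' =>
    have hrec : s ^ (n + 2) * qHermite q x (n + 2) =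
        s * x * (s ^ (n + 1) * qHermite q x (n + 1)) -
          (1 - q ^ (n + 1)) * (s ^ n * qHermite q x n) := by
      rw [qHermite, ← one_sub_mul_qint, ← hs]; ring
    rw [hrec, rogersSzego_add_two hq, hzw, hsum, ← ih, ← ih']
    push_cast; ring

lemma norm_rogersSzego_le (hq : 0 ≤ q) (hz : ‖z‖ ≤ 1) (hw : ‖w‖ ≤ 1) (n : ℕ) :
    ‖rogersSzego q z w n‖ ≤ ∑ k ∈ range (n + 1), qbinom q n k :=
  calc ‖rogersSzego q z w n‖
      ≤ ∑ p ∈ antidiagonal n, ‖(qbinom q n p.2 : ℂ) * z ^ p.1 * w ^ p.2‖ := norm_sum_le _ _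
    _ ≤ ∑ p ∈ antidiagonal n, qbinom q n p.2 := sum_le_sum fun p _ => by
        have hc := qbinom_nonneg hq n p.2
        rw [norm_mul, norm_mul, norm_pow, norm_pow, Complex.norm_real, Real.norm_of_nonneg hc]
        calc qbinom q n p.2 * ‖z‖ ^ p.1 * ‖w‖ ^ p.2 ≤ qbinom q n p.2 * 1 * 1 := by
              gcongr <;> exact pow_le_one₀ (norm_nonneg _) ‹_›
          _ = qbinom q n p.2 := by ring
    _ = ∑ k ∈ range (n + 1), qbinom q n k := by
        rw [← sum_antidiagonal_swap]
        exact sum_antidiagonal_eq_sum_range_succ (fun k _ => qbinom q n k) n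

end RogersSzego

theorem qHermite_bound_general (q : ℝ) (hq : 0 ≤ q ∧ q < 1) (n : ℕ) (x : ℝ)
    (hx : |x| ≤ 2 / Real.sqrt (1 - q)) :
    |qHermite q x n| ≤ (Real.sqrt (1 - q))⁻¹ ^ n * ∑ i ∈ Finset.range (n + 1), qbinom q n i := by
  obtain ⟨hq0, hq1⟩ := hq
  set s := Real.sqrt (1 - q)
  have hs : 0 < s := Real.sqrt_pos.2 (by linarith)
  have hxs : |x * s / 2| ≤ 1 := by
    rw [abs_div, abs_mul, abs_of_pos hs, abs_two, div_le_one two_pos, ← le_div_iff₀ hs]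
    exact hx
  set θ := Real.arccos (x * s / 2)
  have hzw : Complex.exp (θ * Complex.I) * Complex.exp (-θ * Complex.I) = 1 := by
    rw [← Complex.exp_add]; simp
  have hsum : Complex.exp (θ * Complex.I) + Complex.exp (-θ * Complex.I) = s * x := by
    rw [← Complex.two_cos, ← Complex.ofReal_cos, Real.cos_arccos (abs_le.1 hxs).1 (abs_le.1 hxs).2]
    push_cast; ring
  have hw : ‖Complex.exp (-θ * Complex.I)‖ ≤ 1 := by
    rw [← Complex.ofReal_neg, Complex.norm_exp_ofReal_mul_I]
  have hbound := norm_rogersSzego_le hq0 (Complex.norm_exp_ofReal_mul_I θ).le hw n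
  rw [← qHermite_eq_rogersSzego hq0 (Real.sq_sqrt (by linarith)) hzw hsum, Complex.norm_real,
    Real.norm_eq_abs, abs_mul, abs_of_pos (pow_pos hs n)] at hbound
  rw [inv_pow, ← div_eq_inv_mul, le_div_iff₀ (pow_pos hs n)]
  linarith

theorem qHermite_bound (q : ℝ) (hq : 0 ≤ q ∧ q < 1) (n : ℕ) (hn : 1 ≤ n) (x : ℝ)
    (hx : |x| ≤ 2 / Real.sqrt (1 - q)) :
    |qHermite q x n| ≤ (Real.sqrt (1 - q))⁻¹ ^ n * ∑ i ∈ Finset.range (n + 1), qbinom q n i :=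
  qHermite_bound_general q hq n x hx
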